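/- arXiv:2011.05307 — 4 statements merged into one kernel-verified Lean document; each statement's English description precedes it below -/
import Mathlib

section
/- A collection of vectors a_1,...,a_m in Z^n (1 ≤ m < n) is extendable to a basis of Z^n if and only if the gcd of all m×m minors (Grassmann coordinates) of the n×m matrix A = (a_1 ... a_m) equals 1. -/
open Matrix in
lemma detBA (m n : ℕ) (B : Matrix (Fin m) (Fin n) ℤ) (A : Matrix (Fin n) (Fin m) ℤ) :
    (B * A).det = ∑ s : Fin m → Fin n, (∏ i, B i (s i)) * (A.submatrix s id).det := by
  have h1 : (B * A : Matrix (Fin m) (Fin m) ℤ) = Matrix.of fun i => ∑ k : Fin n, B i k • A k := by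
    ext i j
    simp [Matrix.mul_apply, Finset.sum_apply]
  rw [h1]
  show Matrix.detRowAlternating (Matrix.of fun i => ∑ k : Fin n, B i k • A k) = _
  rw [show (Matrix.of fun i => ∑ k : Fin n, B i k • A k) = (fun i => ∑ k : Fin n, B i k • A k) from rfl]
  rw [← AlternatingMap.coe_multilinearMap]
  rw [(Matrix.detRowAlternating (R := ℤ) (n := Fin m)).toMultilinearMap.map_sum
    (g := fun i k => B i k • A k)]
  refine Finset.sum_congr rfl fun s _ => ?_
  rw [MultilinearMap.map_smul_univ]
  simp only [AlternatingMap.coe_multilinearMap, smul_eq_mul]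
  rfl

lemma gcd_comb {α : Type*} [DecidableEq α] (s : Finset α) (f : α → ℤ) :
    ∃ c : α → ℤ, ∑ i ∈ s, c i * f i = s.gcd f := by
  classical
  induction s using Finset.induction_on with
  | empty => exact ⟨0, by simp⟩
  | insert _ _ ha ih =>
    rename_i x s
    obtain ⟨c, hc⟩ := ih
    refine ⟨fun i => if i = x then Int.gcdA (f x) (s.gcd f)
      else Int.gcdB (f x) (s.gcd f) * c i, ?_⟩
    rw [Finset.sum_insert ha, Finset.gcd_insert]
    have h2 : ∑ i ∈ s, (if i = x then Int.gcdA (f x) (s.gcd f)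
        else Int.gcdB (f x) (s.gcd f) * c i) * f i
        = Int.gcdB (f x) (s.gcd f) * s.gcd f := by
      rw [← hc, Finset.mul_sum]
      refine Finset.sum_congr rfl fun i hi => ?_
      rw [if_neg (by rintro rfl; exact ha hi)]
      ring
    rw [show (fun i => if i = x then (f x).gcdA (s.gcd f) else (f x).gcdB (s.gcd f) * c i) x = (f x).gcdA (s.gcd f) from if_pos rfl, h2]
    have := Int.gcd_eq_gcd_ab (f x) (s.gcd f)
    rw [← Int.coe_gcd, this]
    ring

lemma submatrix_one_mul' {m n p : ℕ} (r : Fin m → Fin n) (A : Matrix (Fin n) (Fin p) ℤ) :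
    ((1 : Matrix (Fin n) (Fin n) ℤ).submatrix r id) * A = A.submatrix r id := by
  ext i j
  simp [Matrix.mul_apply, Matrix.one_apply]

lemma gcd_eq_one_iff (n m : ℕ) (A : Matrix (Fin n) (Fin m) ℤ) :
    (Finset.univ.gcd (fun r : Fin m → Fin n => (A.submatrix r id).det) = 1)
      ↔ ∃ B : Matrix (Fin m) (Fin n) ℤ, B * A = 1 := by
  constructor
  · intro h
    obtain ⟨c, hc⟩ := gcd_comb Finset.univ (fun r : Fin m → Fin n => (A.submatrix r id).det)
    rw [h] at hc
    refine ⟨∑ r : Fin m → Fin n,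
      c r • ((A.submatrix r id).adjugate * (1 : Matrix (Fin n) (Fin n) ℤ).submatrix r id), ?_⟩
    rw [Matrix.sum_mul]
    simp only [Matrix.smul_mul, Matrix.mul_assoc, submatrix_one_mul', Matrix.adjugate_mul]
    have he : ∀ r : Fin m → Fin n,
        c r • ((A.submatrix r id).det • (1 : Matrix (Fin m) (Fin m) ℤ))
          = (c r * (A.submatrix r id).det) • (1 : Matrix (Fin m) (Fin m) ℤ) :=
      fun r => by rw [smul_smul]
    simp_rw [he, ← Finset.sum_smul, hc, one_smul]
  · rintro ⟨B, hB⟩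
    have h1 : (Finset.univ.gcd fun r : Fin m → Fin n => (A.submatrix r id).det) ∣ 1 := by
      have hd := detBA m n B A
      rw [hB, Matrix.det_one] at hd
      rw [hd]
      exact Finset.dvd_sum fun s _ =>
        Dvd.dvd.mul_left (Finset.gcd_dvd (Finset.mem_univ s)) _
    have h2 := Finset.normalize_gcd (s := (Finset.univ : Finset (Fin m → Fin n)))
      (f := fun r => (A.submatrix r id).det)
    rcases Int.isUnit_iff.mp (isUnit_of_dvd_one h1) with h | h
    · exact h
    · rw [h] at h2; simp [normalize_apply] at h2; exact absurd h2 (by decide)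

/-- A collection of vectors a_1,...,a_m in ℤ^n (1 ≤ m < n) is extendable to a
basis of ℤ^n iff the gcd of all m×m minors (Grassmann coordinates) of the n×m matrix
A = (a_1 ... a_m) equals 1.  (Minors are determinants of submatrices given by row choices;
non-injective row choices contribute determinant 0 and do not affect the gcd.) -/
theorem stmt0 (n m : ℕ) (hm : 1 ≤ m) (hmn : m < n) (a : Fin m → Fin n → ℤ) :
    (∃ b : Module.Basis (Fin m ⊕ Fin (n - m)) ℤ (Fin n → ℤ), ∀ i, b (Sum.inl i) = a i) ↔
      Finset.univ.gcd (fun r : Fin m → Fin n =>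
        ((Matrix.of fun i j => a j i).submatrix r id).det) = 1 := by
  constructor
  · rintro ⟨b, hb⟩
    apply (gcd_eq_one_iff n m (Matrix.of fun i j => a j i)).mpr
    refine ⟨Matrix.of fun i k => b.coord (Sum.inl i) (Pi.single k 1), ?_⟩
    ext i j
    have hsum : ∑ k, a j k • (Pi.single k 1 : Fin n → ℤ) = a j := by
      have h1 : ∀ k, a j k • (Pi.single k 1 : Fin n → ℤ) = Pi.single k (a j k) := by
        intro k
        rw [← Pi.single_smul, smul_eq_mul, mul_one]
      simp_rw [h1]
      exact Finset.univ_sum_single (a j)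
    have key : ∑ k, (b.coord (Sum.inl i)) (Pi.single k 1) * a j k
        = if i = j then 1 else 0 := by
      calc ∑ k, (b.coord (Sum.inl i)) (Pi.single k 1) * a j k
          = b.coord (Sum.inl i) (∑ k, a j k • (Pi.single k 1 : Fin n → ℤ)) := by
            rw [map_sum]
            refine Finset.sum_congr rfl fun k _ => ?_
            rw [map_smul, smul_eq_mul, mul_comm]
        _ = b.coord (Sum.inl i) (a j) := by rw [hsum]
        _ = if i = j then 1 else 0 := by
            rw [← hb j, Module.Basis.coord_apply, Module.Basis.repr_self]
            simp [Finsupp.single_apply, eq_comm]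
    simpa [Matrix.mul_apply, Matrix.one_apply] using key
  · intro h
    obtain ⟨B, hB⟩ := (gcd_eq_one_iff n m (Matrix.of fun i j => a j i)).mp h
    set A : Matrix (Fin n) (Fin m) ℤ := Matrix.of fun i j => a j i with hA
    set f : (Fin m → ℤ) →ₗ[ℤ] (Fin n → ℤ) := A.mulVecLin with hf
    set g : (Fin n → ℤ) →ₗ[ℤ] (Fin m → ℤ) := B.mulVecLin with hg
    have hgf : ∀ x, g (f x) = x := by
      intro x
      have h1 : (B * A).mulVecLin = LinearMap.id := by rw [hB, Matrix.mulVecLin_one]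
      calc g (f x) = (B * A).mulVecLin x := by rw [Matrix.mulVecLin_mul]; rfl
        _ = x := by rw [h1]; rfl
    have hinj : Function.Injective f := Function.LeftInverse.injective hgf
    have hcompl : IsCompl (LinearMap.range f) (LinearMap.ker g) := by
      constructor
      · rw [Submodule.disjoint_def]
        rintro x ⟨y, rfl⟩ hx
        rw [LinearMap.mem_ker] at hx
        rw [show y = 0 from by rw [← hgf y, hx], map_zero]
      · rw [codisjoint_iff_le_sup]
        intro x _
        refine Submodule.mem_sup.mpr ⟨f (g x), ⟨g x, rfl⟩, x - f (g x), ?_, by ring⟩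
        rw [LinearMap.mem_ker, map_sub, hgf (g x), sub_self]
    let bR : Module.Basis (Fin m) ℤ (LinearMap.range f) :=
      (Pi.basisFun ℤ (Fin m)).map (LinearEquiv.ofInjective f hinj)
    haveI : Module.Finite ℤ ↥(LinearMap.ker g) :=
      Module.Finite.iff_fg.mpr (IsNoetherian.noetherian _)
    let bK := Module.Free.chooseBasis ℤ (LinearMap.ker g)
    let bfull := (bR.prod bK).map (Submodule.prodEquivOfIsCompl _ _ hcompl)
    have hcard : m + Fintype.card (Module.Free.ChooseBasisIndex ℤ (LinearMap.ker g)) = n := by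
      have h1 := Module.finrank_eq_card_basis bfull
      rw [Module.finrank_fin_fun, Fintype.card_sum, Fintype.card_fin] at h1
      omega
    let e : Module.Free.ChooseBasisIndex ℤ (LinearMap.ker g) ≃ Fin (n - m) :=
      Fintype.equivFinOfCardEq (by omega)
    refine ⟨bfull.reindex (Equiv.sumCongr (Equiv.refl (Fin m)) e), fun i => ?_⟩
    rw [Module.Basis.reindex_apply]
    have h2 : (Equiv.sumCongr (Equiv.refl (Fin m)) e).symm (Sum.inl i) = Sum.inl i := rfl
    rw [h2]
    show (Submodule.prodEquivOfIsCompl _ _ hcompl) ((bR.prod bK) (Sum.inl i)) = a i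
    have h3 : (bR.prod bK) (Sum.inl i) = (bR i, 0) := by
      ext
      · rw [Module.Basis.prod_apply_inl_fst]
      · rw [Module.Basis.prod_apply_inl_snd]
    rw [h3, Submodule.coe_prodEquivOfIsCompl']
    simp only [Submodule.coe_zero, add_zero]
    show ((((Pi.basisFun ℤ (Fin m)).map (LinearEquiv.ofInjective f hinj)) i : _) : Fin n → ℤ) = a i
    rw [Module.Basis.map_apply]
    rw [LinearEquiv.ofInjective_apply]
    ext k
    simp [hf, Pi.basisFun_apply, Matrix.mulVecLin_apply, Matrix.mulVec_single, hA]
end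

section
/- An n×m integer matrix A (m < n) can be completed to a matrix in GL_n(Z) by appending n-m integer columns if and only if the gcd of its m×m minors equals 1. -/
open Matrix

/-- Cauchy–Binet style expansion: determinant of a product of rectangular
matrices as a sum over choice functions. -/
theorem detL {R : Type*} [CommRing R] {p : ℕ} {ι : Type*} [Fintype ι]
    (X : Matrix (Fin p) ι R) (Y : Matrix ι (Fin p) R) :
    (X * Y).det = ∑ g : Fin p → ι, (∏ i, X i (g i)) * (Y.submatrix g id).det := by
  classical
  have h1 : (X * Y : Matrix (Fin p) (Fin p) R) = fun i => ∑ k : ι, X i k • Y k := by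
    funext i j
    simp [Matrix.mul_apply, Finset.sum_apply]
  have h2 : ∀ g : Fin p → ι, Y.submatrix g id = fun i => Y (g i) := by
    intro g; funext i j; rfl
  have e0 : (X * Y).det = (Matrix.detRowAlternating (R := R) (n := Fin p)).toMultilinearMap
      (fun i => ∑ k : ι, X i k • Y k) := by rw [h1]; rfl
  rw [e0, (Matrix.detRowAlternating (R := R) (n := Fin p)).toMultilinearMap.map_sum
    (fun i (k : ι) => X i k • Y k)]
  refine Finset.sum_congr rfl fun g _ => ?_
  rw [(Matrix.detRowAlternating (R := R) (n := Fin p)).toMultilinearMap.map_smul_univ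
    (fun i => X i (g i)) (fun i => Y (g i))]
  rw [smul_eq_mul]
  congr 1

theorem gcd_dvd_minorUA {n m : ℕ} (A : Matrix (Fin n) (Fin m) ℤ)
    (U : Matrix (Fin n) (Fin n) ℤ) (r : Fin m → Fin n) :
    (Finset.univ.gcd fun r : Fin m → Fin n => (A.submatrix r id).det) ∣
      ((U * A).submatrix r id).det := by
  have h : (U * A).submatrix r id = (U.submatrix r id) * A := by
    ext i j; simp [Matrix.mul_apply]
  rw [h, detL]
  exact Finset.dvd_sum fun g _ => Dvd.dvd.mul_left (Finset.gcd_dvd (Finset.mem_univ g)) _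

theorem fwd {n m : ℕ} (hmn : m < n) (A : Matrix (Fin n) (Fin m) ℤ)
    (e₀ : Fin m ⊕ Fin (n - m) ≃ Fin n) (B : Matrix (Fin n) (Fin (n - m)) ℤ)
    (hB : IsUnit ((Matrix.fromCols A B).submatrix id e₀.symm).det) :
    Finset.univ.gcd (fun r : Fin m → Fin n => (A.submatrix r id).det) = 1 := by
  classical
  set C : Matrix (Fin n) (Fin n) ℤ := (Matrix.fromCols A B).submatrix id e₀.symm with hC
  letI := C.invertibleOfIsUnitDet hB
  set E : Matrix (Fin n) (Fin m) ℤ :=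
    Matrix.of fun i j => if i = e₀ (Sum.inl j) then (1 : ℤ) else 0 with hE
  have hCE : C * E = A := by
    ext i j
    simp only [Matrix.mul_apply, hE, Matrix.of_apply, mul_ite, mul_one, mul_zero]
    rw [Finset.sum_ite_eq' Finset.univ (e₀ (Sum.inl j)) (fun k => C i k)]
    simp [hC, Matrix.fromCols]
  have hEinv : ⅟C * A = E := by
    rw [← hCE, ← Matrix.mul_assoc, invOf_mul_self, Matrix.one_mul]
  have h1 : (E.submatrix (fun j : Fin m => e₀ (Sum.inl j)) id) = (1 : Matrix (Fin m) (Fin m) ℤ) := by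
    ext i j
    simp only [hE, Matrix.submatrix_apply, Matrix.of_apply, id, Matrix.one_apply,
      EmbeddingLike.apply_eq_iff_eq, Sum.inl.injEq]
  have hdvd : (Finset.univ.gcd fun r : Fin m → Fin n => (A.submatrix r id).det) ∣ 1 := by
    have := gcd_dvd_minorUA A (⅟C) (fun j : Fin m => e₀ (Sum.inl j))
    rwa [hEinv, h1, Matrix.det_one] at this
  have hnorm := Finset.normalize_gcd (s := (Finset.univ : Finset (Fin m → Fin n)))
    (f := fun r : Fin m → Fin n => (A.submatrix r id).det)
  rcases Int.isUnit_iff.mp (isUnit_of_dvd_one hdvd) with h | h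
  · exact h
  · exfalso
    have h0 := Int.nonneg_of_normalize_eq_self hnorm
    rw [h] at h0; omega

theorem bwd {n m : ℕ} (hmn : m < n) (A : Matrix (Fin n) (Fin m) ℤ)
    (e₀ : Fin m ⊕ Fin (n - m) ≃ Fin n)
    (hg : Finset.univ.gcd (fun r : Fin m → Fin n => (A.submatrix r id).det) = 1) :
    ∃ B : Matrix (Fin n) (Fin (n - m)) ℤ,
      IsUnit ((Matrix.fromCols A B).submatrix id e₀.symm).det := by
  classical
  set colA : Fin m → (Fin n → ℤ) := fun j i => A i j with hcolA
  set N : Submodule ℤ (Fin n → ℤ) := Submodule.span ℤ (Set.range colA) with hN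
  obtain ⟨k, bM, bN, f, a, hsnf⟩ := Submodule.smithNormalForm (Pi.basisFun ℤ (Fin n)) N
  set c : Fin m → N := fun j => ⟨colA j, Submodule.subset_span ⟨j, rfl⟩⟩ with hc
  set Q : Matrix (Fin k) (Fin m) ℤ := Matrix.of fun t j => bN.repr (c j) t with hQ
  set PK : Matrix (Fin n) (Fin k) ℤ := Matrix.of fun i t => a t * bM (f t) i with hPK
  have hrepr : ∀ j, colA j = ∑ t, (Q t j * a t) • bM (f t) := by
    intro j
    have h1 : (c j : Fin n → ℤ) = ∑ t, bN.repr (c j) t • (bN t : Fin n → ℤ) := by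
      conv_lhs => rw [← bN.sum_repr (c j)]
      push_cast [Submodule.coe_sum]
      rfl
    have h2 : (c j : Fin n → ℤ) = colA j := rfl
    rw [← h2, h1]
    refine Finset.sum_congr rfl fun t _ => ?_
    rw [hsnf t, smul_smul]
    rfl
  have hAfact : A = PK * Q := by
    ext i j
    have := congrFun (hrepr j) i
    simp only [hcolA] at this
    rw [this, Matrix.mul_apply]
    simp only [Finset.sum_apply, Pi.smul_apply, smul_eq_mul, hPK, hQ, Matrix.of_apply]
    exact Finset.sum_congr rfl fun t _ => by ring
  -- k = m
  have hkm : k = m := by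
    have hle : k ≤ m := by
      have h1 : (Module.rank ℤ N) = k := by
        rw [← bN.mk_eq_rank'', Cardinal.mk_fin]
      have h2 : Module.rank ℤ N ≤ m := by
        refine le_trans (rank_span_le _) ?_
        refine le_trans (Cardinal.mk_range_le) ?_
        simp
      rw [h1] at h2
      exact_mod_cast h2
    by_contra hne
    have hlt : k < m := lt_of_le_of_ne hle hne
    have hzero : ∀ r : Fin m → Fin n, (A.submatrix r id).det = 0 := by
      intro r
      have h3 : A.submatrix r id = (PK.submatrix r id) * Q := by
        rw [hAfact]; ext i j; simp [Matrix.mul_apply]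
      rw [h3, detL]
      refine Finset.sum_eq_zero fun g _ => ?_
      obtain ⟨i, j, hij, hgij⟩ : ∃ i j, i ≠ j ∧ g i = g j := by
        obtain ⟨i, j, hij, h⟩ := Fintype.exists_ne_map_eq_of_card_lt g (by simpa using hlt)
        exact ⟨i, j, hij, h⟩
      have : (Q.submatrix g id).det = 0 := by
        refine Matrix.det_zero_of_row_eq hij ?_
        funext l; simp [Matrix.submatrix_apply, hgij]
      rw [this, mul_zero]
    rw [Finset.gcd_eq_zero_iff.mpr (fun r _ => hzero r)] at hg
    exact absurd hg (by norm_num)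
  subst hkm
  rename' k => m
  -- factor A = PM * R0 with R0 square
  set R0 : Matrix (Fin m) (Fin m) ℤ := Matrix.of fun t j => a t * Q t j with hR0
  set PM : Matrix (Fin n) (Fin m) ℤ := Matrix.of fun i t => bM (f t) i with hPM
  have hA2 : A = PM * R0 := by
    rw [hAfact]; ext i j
    simp only [Matrix.mul_apply, hPK, hPM, hR0, Matrix.of_apply]
    exact Finset.sum_congr rfl fun t _ => by ring
  have hdetR0 : IsUnit R0.det := by
    refine isUnit_of_dvd_one ?_
    rw [← hg]
    refine Finset.dvd_gcd fun r _ => ?_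
    have h3 : A.submatrix r id = (PM.submatrix r id) * R0 := by
      rw [hA2]; ext i j; simp [Matrix.mul_apply]
    rw [h3, Matrix.det_mul]
    exact Dvd.intro_left _ rfl
  -- complement equivalence
  have hcardc : Fintype.card ((Set.range ⇑f)ᶜ : Set (Fin n)) = n - m := by
    rw [Fintype.card_compl_set]
    simp [Set.card_range_of_injective f.injective]
  let ecompl : Fin (n - m) ≃ ((Set.range ⇑f)ᶜ : Set (Fin n)) :=
    Fintype.equivOfCardEq (by simp [hcardc])
  let e2 : Fin m ⊕ Fin (n - m) ≃ Fin n :=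
    (Equiv.sumCongr (Equiv.ofInjective ⇑f f.injective) ecompl).trans
      (Equiv.Set.sumCompl (Set.range ⇑f))
  have he2l : ∀ i, e2 (Sum.inl i) = f i := by
    intro i; simp [e2]
  -- the completion
  refine ⟨Matrix.of fun i j => bM (e2 (Sum.inr j)) i, ?_⟩
  set B : Matrix (Fin n) (Fin (n - m)) ℤ := Matrix.of fun i j => bM (e2 (Sum.inr j)) i with hB
  set X : Matrix (Fin n) (Fin m ⊕ Fin (n - m)) ℤ := Matrix.fromCols A B with hX
  -- reduce to square matrix indexed by the sum type, with rows via e2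
  have hdet1 : (X.submatrix id e₀.symm).det = (X.submatrix e₀ id).det := by
    have : X.submatrix id ⇑e₀.symm = (X.submatrix ⇑e₀ id).submatrix ⇑e₀.symm ⇑e₀.symm := by
      ext i j; simp
    rw [this, Matrix.det_submatrix_equiv_self]
  have hdet2 : (X.submatrix ⇑e₀ id) = ((X.submatrix ⇑e2 id)).submatrix ⇑(e₀.trans e2.symm) id := by
    ext i j; simp
  set T : Matrix (Fin m ⊕ Fin (n - m)) (Fin m ⊕ Fin (n - m)) ℤ := X.submatrix ⇑e2 id with hT
  set b0 : Module.Basis (Fin n) ℤ (Fin n → ℤ) := Pi.basisFun ℤ (Fin n) with hb0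
  set P2 : Matrix (Fin m ⊕ Fin (n - m)) (Fin m ⊕ Fin (n - m)) ℤ :=
    (b0.toMatrix ⇑bM).submatrix ⇑e2 ⇑e2 with hP2
  have hTfact : T = P2 * Matrix.fromBlocks R0 0 0 (1 : Matrix (Fin (n - m)) (Fin (n - m)) ℤ) := by
    ext s t
    have hP2app : ∀ s t, P2 s t = bM (e2 t) (e2 s) := by
      intro s t
      simp [hP2, Module.Basis.toMatrix_apply, hb0]
    rw [Matrix.mul_apply, Fintype.sum_sum_type]
    cases t with
    | inl j =>
      have hAe : A (e2 s) j = ∑ i : Fin m, bM (f i) (e2 s) * R0 i j := by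
        rw [hA2, Matrix.mul_apply]
        simp [hPM]
      simp only [Matrix.fromBlocks_apply₁₁, Matrix.fromBlocks_apply₂₁, Matrix.zero_apply,
        mul_zero, Finset.sum_const_zero, add_zero]
      have : T s (Sum.inl j) = A (e2 s) j := by simp [hT, hX, Matrix.fromCols]
      rw [this, hAe]
      refine Finset.sum_congr rfl fun i _ => ?_
      rw [hP2app s (Sum.inl i), he2l i]
    | inr j =>
      simp only [Matrix.fromBlocks_apply₁₂, Matrix.fromBlocks_apply₂₂, Matrix.zero_apply,
        mul_zero, Finset.sum_const_zero, zero_add, Matrix.one_apply]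
      have : T s (Sum.inr j) = bM (e2 (Sum.inr j)) (e2 s) := by simp [hT, hX, hB, Matrix.fromCols]
      rw [this]
      have hcongr : ∀ x : Fin (n - m), P2 s (Sum.inr x) * (if x = j then (1:ℤ) else 0)
          = if x = j then bM (e2 (Sum.inr j)) (e2 s) else 0 := by
        intro x
        by_cases h : x = j
        · subst h; simp [hP2app]
        · simp [h]
      rw [Finset.sum_congr rfl fun x _ => hcongr x]
      simp
  have hP2unit : IsUnit P2.det := by
    rw [hP2, Matrix.det_submatrix_equiv_self]
    letI := b0.invertibleToMatrix bM
    exact Matrix.isUnit_det_of_invertible _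
  have hTunit : IsUnit T.det := by
    rw [hTfact, Matrix.det_mul, Matrix.det_fromBlocks_zero₂₁, Matrix.det_one, mul_one]
    exact hP2unit.mul hdetR0
  have hperm := Matrix.det_permute ((e₀.trans e2.symm) : Equiv.Perm (Fin m ⊕ Fin (n - m))) T
  have heq : (T.submatrix ⇑(e₀.trans e2.symm) id) = fun i => T ((e₀.trans e2.symm) i) := by
    ext i j; simp
  rw [hdet1, hdet2, hperm]
  exact ((Equiv.Perm.sign (e₀.trans e2.symm)).isUnit.mul hTunit)


/-- An n×m integer matrix A (m < n) can be completed to a matrix in GL_n(ℤ)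
by appending n-m integer columns iff the gcd of its m×m minors equals 1. -/
theorem stmt1 (n m : ℕ) (hmn : m < n) (A : Matrix (Fin n) (Fin m) ℤ) :
    (∃ B : Matrix (Fin n) (Fin (n - m)) ℤ,
      IsUnit ((Matrix.fromCols A B).submatrix id
        (finSumFinEquiv.trans (finCongr (by omega : m + (n - m) = n))).symm).det) ↔
      Finset.univ.gcd (fun r : Fin m → Fin n => (A.submatrix r id).det) = 1 := by
  constructor
  · rintro ⟨B, hB⟩
    exact fwd hmn A _ B hB
  · intro hg
    exact bwd hmn A _ hg
end

section
/- Let c ∈ Z^n (n ≥ 2) with coprime coordinates and b ∈ Z. For any T > 0, the number of x ∈ Z^n with c·x = b and |x|_∞ ≤ T is at most (2(T + M)/|c|_∞ + 1)·(2(T + M) + 1)^{n-2}, where M = max{|c|_∞, |b|}. -/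
lemma bezout_finset {ι : Type*} [DecidableEq ι] (c : ι → ℤ) (s : Finset ι) :
    ∃ u : ι → ℤ, ∑ i ∈ s, u i * c i = s.gcd c := by
  classical
  induction s using Finset.induction_on with
  | empty => exact ⟨0, by simp⟩
  | @insert a s ha ih =>
    obtain ⟨u, hu⟩ := ih
    refine ⟨fun i => if i = a then (c a).gcdA (s.gcd c) else (c a).gcdB (s.gcd c) * u i, ?_⟩
    rw [Finset.sum_insert ha, Finset.gcd_insert]
    have h1 : GCDMonoid.gcd (c a) (s.gcd c) =
        c a * (c a).gcdA (s.gcd c) + (s.gcd c) * (c a).gcdB (s.gcd c) := by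
      rw [← Int.gcd_eq_gcd_ab]
      exact (Int.coe_gcd _ _).symm
    rw [h1]
    have h2 : ∀ i ∈ s, (if i = a then (c a).gcdA (s.gcd c) else (c a).gcdB (s.gcd c) * u i) * c i
        = (c a).gcdB (s.gcd c) * (u i * c i) := by
      intro i hi
      rw [if_neg (by rintro rfl; exact ha hi)]
      ring
    rw [Finset.sum_congr rfl h2, ← Finset.mul_sum, hu]
    simp only [if_true]
    ring



/-- The sup-norm of an integer vector, as a real number. -/
noncomputable def supNorm {n : ℕ} (c : Fin n → ℤ) : ℝ :=
  ((Finset.univ.sup fun j => (c j).natAbs : ℕ) : ℝ)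

/-- For c ∈ ℤ^n (n ≥ 2) with coprime coordinates, b ∈ ℤ and any T > 0,
with M := max{|c|_∞, |b|}, the number of x ∈ ℤ^n with c·x = b and |x|_∞ ≤ T is at most
(2(T + M)/|c|_∞ + 1)·(2(T + M) + 1)^{n-2}. -/
theorem stmt6 (n : ℕ) (hn : 2 ≤ n) (c : Fin n → ℤ) (b : ℤ)
    (hc : Finset.univ.gcd (fun i => c i) = 1) (T : ℝ) (hT : 0 < T) :
    ((Set.ncard {x : Fin n → ℤ | ∑ i, c i * x i = b ∧ ∀ i, (|x i| : ℝ) ≤ T}) : ℝ) ≤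
      (2 * (T + max (supNorm c) (|b| : ℝ)) / supNorm c + 1) *
        (2 * (T + max (supNorm c) (|b| : ℝ)) + 1) ^ (n - 2) := by
  classical
  haveI : Nonempty (Fin n) := ⟨⟨0, by omega⟩⟩
  -- Bezout coefficients
  obtain ⟨u, hu⟩ := bezout_finset (fun i => c i) Finset.univ
  rw [hc] at hu
  -- the max coordinate
  set Cn : ℕ := Finset.univ.sup fun j => (c j).natAbs with hCn
  obtain ⟨i0, -, hi0⟩ := Finset.exists_mem_eq_sup (Finset.univ : Finset (Fin n))
    Finset.univ_nonempty (fun j => (c j).natAbs)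
  rw [← hCn] at hi0
  have hCn1 : 1 ≤ Cn := by
    rcases Nat.eq_zero_or_pos Cn with h0 | h; swap; · exact h
    have hz : ∀ i, c i = 0 := by
      intro i
      have h1 : (c i).natAbs ≤ Cn := by
        rw [hCn]; exact Finset.le_sup (f := fun j => (c j).natAbs) (Finset.mem_univ i)
      omega
    simp [hz] at hu
  haveI : NeZero Cn := ⟨by omega⟩
  set C : ℤ := (Cn : ℤ) with hC
  have hC0 : (0 : ℤ) < C := by rw [hC]; exact_mod_cast hCn1
  have hCdvd : C ∣ c i0 := by
    rw [hC, hi0]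
    exact Int.natAbs_dvd.mpr dvd_rfl
  have hci0 : c i0 ≠ 0 := by
    intro h
    rw [h] at hi0
    simp at hi0
    omega
  have hcast0 : ((c i0 : ℤ) : ZMod Cn) = 0 :=
    (ZMod.intCast_zmod_eq_zero_iff_dvd _ _).mpr (by exact_mod_cast hCdvd)
  set T' : ℤ := ⌊T⌋ with hT'
  have hT'0 : 0 ≤ T' := Int.floor_nonneg.mpr hT.le
  set lo : ℤ := (-T') / C with hlo
  set hi : ℤ := T' / C with hhi
  set K : ℕ := (Finset.Icc lo hi).card with hK
  -- the congruence form
  set φ : ({j : Fin n // j ≠ i0} → ZMod Cn) → ZMod Cn :=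
    fun r => ∑ j, ((c j.1 : ℤ) : ZMod Cn) * r j with hφ
  have hφcast : ∀ x : Fin n → ℤ, φ (fun j => ((x j.1 : ℤ) : ZMod Cn)) =
      (((∑ i, c i * x i) - c i0 * x i0 : ℤ) : ZMod Cn) := by
    intro x
    have h1 : ∑ j ∈ Finset.univ.erase i0, ((c j * x j : ℤ) : ZMod Cn)
        = ∑ j : {j : Fin n // j ≠ i0}, ((c j.1 * x j.1 : ℤ) : ZMod Cn) :=
      Finset.sum_subtype _ (by simp) _
    have h2 : ∑ j ∈ Finset.univ.erase i0, c j * x j = (∑ i, c i * x i) - c i0 * x i0 := by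
      have e0 : ∑ j ∈ Finset.univ.erase i0, c j * x j + c i0 * x i0 = ∑ i, c i * x i :=
        Finset.sum_erase_add Finset.univ (fun i => c i * x i) (Finset.mem_univ i0)
      linarith
    calc φ (fun j => ((x j.1 : ℤ) : ZMod Cn))
        = ∑ j : {j : Fin n // j ≠ i0}, ((c j.1 * x j.1 : ℤ) : ZMod Cn) := by
          simp only [hφ]
          exact Finset.sum_congr rfl fun j _ => by push_cast; ring
      _ = ∑ j ∈ Finset.univ.erase i0, ((c j * x j : ℤ) : ZMod Cn) := h1.symm
      _ = ((∑ j ∈ Finset.univ.erase i0, c j * x j : ℤ) : ZMod Cn) := by push_cast; rfl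
      _ = _ := by rw [h2]
  have hφw : φ (fun j => ((u j.1 : ℤ) : ZMod Cn)) = 1 := by
    have h1 : ∑ i, c i * u i = 1 := by
      rw [← hu]; exact Finset.sum_congr rfl fun i _ => mul_comm _ _
    rw [hφcast u, h1]
    push_cast [hcast0]
    ring
  set w : {j : Fin n // j ≠ i0} → ZMod Cn := fun j => ((u j.1 : ℤ) : ZMod Cn) with hw
  have hφsh : ∀ (r : {j : Fin n // j ≠ i0} → ZMod Cn) (t : ZMod Cn),
      φ (fun j => r j + t * w j) = φ r + t := by
    intro r t
    simp only [hφ, mul_add, Finset.sum_add_distrib]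
    congr 1
    have h3 : ∀ j : {j : Fin n // j ≠ i0}, ((c j.1 : ℤ) : ZMod Cn) * (t * w j)
        = t * (((c j.1 : ℤ) : ZMod Cn) * w j) := fun j => by ring
    rw [Finset.sum_congr rfl fun j _ => h3 j, ← Finset.mul_sum]
    have h4 : (∑ j : {j : Fin n // j ≠ i0}, ((c j.1 : ℤ) : ZMod Cn) * w j) = φ w := rfl
    rw [h4, hφw, mul_one]
  set Fb : Finset ({j : Fin n // j ≠ i0} → ZMod Cn) :=
    Finset.univ.filter (fun r => φ r = (b : ZMod Cn)) with hFbdef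
  have hfib : ∀ β : ZMod Cn,
      (Finset.univ.filter fun r : {j : Fin n // j ≠ i0} → ZMod Cn => φ r = β).card = Fb.card := by
    intro β
    apply Finset.card_bij' (i := fun r _ => fun j => r j + ((b : ZMod Cn) - β) * w j)
      (j := fun r _ => fun j => r j + (β - (b : ZMod Cn)) * w j)
    · intro r hr
      rw [Finset.mem_filter] at hr
      rw [hFbdef, Finset.mem_filter]
      refine ⟨Finset.mem_univ _, ?_⟩
      rw [hφsh, hr.2]
      ring
    · intro r hr
      rw [hFbdef, Finset.mem_filter] at hr
      rw [Finset.mem_filter]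
      refine ⟨Finset.mem_univ _, ?_⟩
      rw [hφsh, hr.2]
      ring
    · intro r hr
      funext j
      simp only
      ring
    · intro r hr
      funext j
      simp only
      ring
  have hJ : Fintype.card {j : Fin n // j ≠ i0} = n - 1 := by
    have h1 : Fintype.card {j : Fin n // ¬ j = i0} = n - 1 := by
      rw [Fintype.card_subtype_compl, Fintype.card_fin, Fintype.card_subtype_eq]
    exact h1
  have hFbcard : Fb.card = Cn ^ (n - 2) := by
    have h1 : (Finset.univ : Finset ({j : Fin n // j ≠ i0} → ZMod Cn)).card
        = ∑ β : ZMod Cn, (Finset.univ.filter fun r => φ r = β).card :=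
      Finset.card_eq_sum_card_fiberwise (fun r _ => Finset.mem_univ (φ r))
    rw [Finset.sum_congr rfl (fun β _ => hfib β), Finset.sum_const, smul_eq_mul,
      Finset.card_univ, Finset.card_univ, Fintype.card_fun, ZMod.card, hJ] at h1
    have h3 : Cn ^ (n - 1) = Cn * Cn ^ (n - 2) := by
      rw [← pow_succ']
      congr 1
      omega
    apply Nat.eq_of_mul_eq_mul_left (show 0 < Cn by omega)
    rw [← h1, h3]
  -- the injection
  set Φ : (Fin n → ℤ) → ({j : Fin n // j ≠ i0} → ℤ) × ({j : Fin n // j ≠ i0} → ZMod Cn) :=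
    fun x => (fun j => x j.1 / C, fun j => ((x j.1 : ℤ) : ZMod Cn)) with hΦ
  set S : Set (Fin n → ℤ) := {x : Fin n → ℤ | ∑ i, c i * x i = b ∧ ∀ i, (|x i| : ℝ) ≤ T} with hS
  set Ft := (Fintype.piFinset fun _ : {j : Fin n // j ≠ i0} => Finset.Icc lo hi) ×ˢ Fb with hFt
  have hbox : ∀ x ∈ S, ∀ i, -T' ≤ x i ∧ x i ≤ T' := by
    intro x hx i
    have h0 := hx.2 i
    rw [← Int.cast_abs] at h0
    have h1 : |x i| ≤ T' := Int.le_floor.mpr h0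
    constructor <;> [linarith [neg_abs_le (x i)]; linarith [le_abs_self (x i)]]
  have hmaps : ∀ x ∈ S, Φ x ∈ (Ft : Set _) := by
    intro x hx
    simp only [hFt, Finset.coe_product, Set.mem_prod, Finset.mem_coe, Fintype.mem_piFinset]
    constructor
    · intro j
      rw [Finset.mem_Icc, hlo, hhi]
      exact ⟨Int.ediv_le_ediv hC0 (hbox x hx j.1).1, Int.ediv_le_ediv hC0 (hbox x hx j.1).2⟩
    · rw [hFbdef, Finset.mem_filter]
      refine ⟨Finset.mem_univ _, ?_⟩
      rw [hφcast x, hx.1]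
      push_cast [hcast0]
      ring
  have hinj : Set.InjOn Φ S := by
    intro x hx y hy hxy
    have hcomp : ∀ j : {j : Fin n // j ≠ i0}, x j.1 / C = y j.1 / C ∧
        ((x j.1 : ℤ) : ZMod Cn) = ((y j.1 : ℤ) : ZMod Cn) := by
      intro j
      exact ⟨congrFun (congrArg Prod.fst hxy) j, congrFun (congrArg Prod.snd hxy) j⟩
    have hne : ∀ j, j ≠ i0 → x j = y j := by
      intro j hj
      obtain ⟨h1, h2⟩ := hcomp ⟨j, hj⟩
      have h3 : x j % C = y j % C := by
        have h4 := (ZMod.intCast_eq_intCast_iff _ _ _).mp h2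
        rw [hC]
        exact h4
      have e1 := Int.mul_ediv_add_emod (x j) C
      have e2 := Int.mul_ediv_add_emod (y j) C
      rw [← e1, ← e2, h1, h3]
    have hi0eq : x i0 = y i0 := by
      have h1 : ∑ i ∈ Finset.univ.erase i0, c i * x i = ∑ i ∈ Finset.univ.erase i0, c i * y i :=
        Finset.sum_congr rfl fun i hiE => by rw [hne i (Finset.mem_erase.mp hiE).1]
      have e1 : ∑ i ∈ Finset.univ.erase i0, c i * x i + c i0 * x i0 = ∑ i, c i * x i :=
        Finset.sum_erase_add Finset.univ (fun i => c i * x i) (Finset.mem_univ i0)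
      have e2 : ∑ i ∈ Finset.univ.erase i0, c i * y i + c i0 * y i0 = ∑ i, c i * y i :=
        Finset.sum_erase_add Finset.univ (fun i => c i * y i) (Finset.mem_univ i0)
      have hx1 : ∑ i, c i * x i = b := hx.1
      have hy1 : ∑ i, c i * y i = b := hy.1
      have h5 : c i0 * x i0 = c i0 * y i0 := by linarith
      exact mul_left_cancel₀ hci0 h5
    funext j
    by_cases hj : j = i0
    · rw [hj]; exact hi0eq
    · exact hne j hj
  -- counting
  have hcount : S.ncard ≤ K ^ (n - 1) * Cn ^ (n - 2) := by
    calc S.ncard = (Φ '' S).ncard := (Set.ncard_image_of_injOn hinj).symm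
      _ ≤ (Ft : Set (({j : Fin n // j ≠ i0} → ℤ) × ({j : Fin n // j ≠ i0} → ZMod Cn))).ncard := by
          refine Set.ncard_le_ncard ?_ Ft.finite_toSet
          rintro _ ⟨x, hx, rfl⟩
          exact hmaps x hx
      _ = Ft.card := Set.ncard_coe_finset Ft
      _ = K ^ (n - 1) * Cn ^ (n - 2) := by
          rw [hFt, Finset.card_product, Fintype.card_piFinset, hFbcard]
          congr 1
          rw [Finset.prod_const, Finset.card_univ, hJ, hK]
  -- real arithmetic
  have hsupC : supNorm c = (Cn : ℝ) := by rw [supNorm, ← hCn]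
  clear hfib hFbcard hJ hφcast hφw hφsh hmaps hinj hbox hFbdef hFt hΦ hw hφ
  clear Ft Fb Φ w φ
  clear_value S K hi lo T' C Cn
  have hCr1 : (1 : ℝ) ≤ (Cn : ℝ) := by exact_mod_cast hCn1
  have hCr0 : (0 : ℝ) < (Cn : ℝ) := by linarith
  rw [hsupC]
  set Mx : ℝ := max ((Cn : ℝ)) (|b| : ℝ) with hMx
  have hMC : (Cn : ℝ) ≤ Mx := le_max_left _ _
  have h1 : C * hi ≤ T' := by
    rw [hhi]
    linarith [Int.mul_ediv_add_emod T' C, Int.emod_nonneg T' (ne_of_gt hC0)]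
  have h2 : -T' - C < C * lo := by
    rw [hlo]
    linarith [Int.mul_ediv_add_emod (-T') C, Int.emod_lt_of_pos (-T') hC0]
  have hTT' : (T' : ℝ) ≤ T := by rw [hT']; exact_mod_cast Int.floor_le T
  have hhiR : (hi : ℝ) * (Cn : ℝ) ≤ T := by
    have : ((C * hi : ℤ) : ℝ) ≤ ((T' : ℤ) : ℝ) := by exact_mod_cast h1
    push_cast [hC] at this
    linarith
  have hloR : -(lo : ℝ) * (Cn : ℝ) ≤ T + (Cn : ℝ) := by
    have : ((-T' - C : ℤ) : ℝ) ≤ ((C * lo : ℤ) : ℝ) := by exact_mod_cast h2.le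
    push_cast [hC] at this
    nlinarith
  have hKR : (K : ℝ) ≤ 2 * T / (Cn : ℝ) + 2 := by
    have hi0' : 0 ≤ hi := by rw [hhi]; exact Int.ediv_nonneg hT'0 hC0.le
    have lo0' : lo ≤ 0 := by
      rw [hlo]
      calc (-T') / C ≤ 0 / C := Int.ediv_le_ediv hC0 (by omega)
        _ = 0 := Int.zero_ediv C
    have hKz : (K : ℤ) = hi + 1 - lo := by
      rw [hK, Int.card_Icc]
      omega
    have hKz' : (K : ℝ) = (hi : ℝ) + 1 - (lo : ℝ) := by exact_mod_cast hKz
    have e1 : (hi : ℝ) ≤ T / (Cn : ℝ) := by rw [le_div_iff₀ hCr0]; exact hhiR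
    have e2 : -(lo : ℝ) ≤ T / (Cn : ℝ) + 1 := by
      have e3 : -(lo : ℝ) ≤ (T + (Cn : ℝ)) / (Cn : ℝ) := by
        rw [le_div_iff₀ hCr0]; linarith
      have e4 : (T + (Cn : ℝ)) / (Cn : ℝ) = T / (Cn : ℝ) + 1 := by
        field_simp
      linarith
    have e5 : 2 * T / (Cn : ℝ) = T / (Cn : ℝ) + T / (Cn : ℝ) := by ring
    linarith [hKz', e1, e2]
  have hKCR : (K : ℝ) * (Cn : ℝ) ≤ 2 * T + 2 * (Cn : ℝ) := by
    have h6 := mul_le_mul_of_nonneg_right hKR hCr0.le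
    have h7 : (2 * T / (Cn : ℝ) + 2) * (Cn : ℝ) = 2 * T + 2 * (Cn : ℝ) := by
      field_simp
    linarith
  have hm : n - 1 = (n - 2) + 1 := by omega
  calc (S.ncard : ℝ) ≤ ((K ^ (n - 1) * Cn ^ (n - 2) : ℕ) : ℝ) := by exact_mod_cast hcount
    _ = (K : ℝ) * ((K : ℝ) * (Cn : ℝ)) ^ (n - 2) := by
        push_cast
        rw [hm, pow_succ, mul_pow]
        ring
    _ ≤ (2 * (T + Mx) / (Cn : ℝ) + 1) * (2 * (T + Mx) + 1) ^ (n - 2) := by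
        have hA : (K : ℝ) ≤ 2 * (T + Mx) / (Cn : ℝ) + 1 := by
          have e6 : 2 * (T + Mx) / (Cn : ℝ) = 2 * T / (Cn : ℝ) + 2 * Mx / (Cn : ℝ) := by ring
          have e7 : (1 : ℝ) ≤ 2 * Mx / (Cn : ℝ) := by
            rw [le_div_iff₀ hCr0]
            linarith
          linarith
        have hB : (K : ℝ) * (Cn : ℝ) ≤ 2 * (T + Mx) + 1 := by linarith
        have hKC0 : (0 : ℝ) ≤ (K : ℝ) * (Cn : ℝ) := by positivity
        apply mul_le_mul hA (pow_le_pow_left₀ hKC0 hB _) (pow_nonneg hKC0 _)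
        positivity
end

section
/- Let 0 < α < 1 be irrational and let F_n(α) be the set of Farey approximations to α with denominator at most n. Then |F_n(α)|/n → 0 as n → ∞. -/
open Filter
open scoped Classical

/-- The mediant of two rationals (written in lowest terms): (a+c)/(b+d). -/
def mediant (x y : ℚ) : ℚ := ((x.num + y.num : ℤ) : ℚ) / (((x.den : ℤ) + (y.den : ℤ) : ℤ) : ℚ)

/-- The pair (best lower approximation, best upper approximation) to α among the Farey
approximations produced so far, starting from (0/1, 1/1). -/
noncomputable def sternPair (α : ℝ) : ℕ → ℚ × ℚ
  | 0 => (0, 1)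
  | k + 1 =>
      let p := sternPair α k
      let m := mediant p.1 p.2
      if (m : ℝ) < α then (m, p.2) else (p.1, m)

/-- The sequence of Farey approximations to α: F₀ = 0/1, F₁ = 1/1, and the (k+2)-nd is the
mediant of the best upper and lower approximations among the previous ones. -/
noncomputable def fareyApprox (α : ℝ) : ℕ → ℚ
  | 0 => 0
  | 1 => 1
  | k + 2 => mediant (sternPair α k).1 (sternPair α k).2

lemma sternPair_succ (α : ℝ) (k : ℕ) :
    sternPair α (k+1) = if ((mediant (sternPair α k).1 (sternPair α k).2 : ℚ) : ℝ) < α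
      then (mediant (sternPair α k).1 (sternPair α k).2, (sternPair α k).2)
      else ((sternPair α k).1, mediant (sternPair α k).1 (sternPair α k).2) := rfl

lemma mediant_num_den {x y : ℚ} (h : x.num * y.den - y.num * x.den = -1) :
    (mediant x y).num = x.num + y.num ∧ ((mediant x y).den : ℤ) = (x.den : ℤ) + y.den := by
  have hd : (0:ℤ) < (x.den : ℤ) + y.den := by positivity
  have hcop : IsCoprime (x.num + y.num) ((x.den:ℤ) + y.den) :=
    ⟨-(y.den : ℤ), y.num, by linarith [h]⟩
  have hcop' : Nat.Coprime (x.num + y.num).natAbs ((x.den:ℤ) + y.den).natAbs :=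
    Int.isCoprime_iff_gcd_eq_one.mp hcop
  exact ⟨Rat.num_div_eq_of_coprime hd hcop', Rat.den_div_eq_of_coprime hd hcop'⟩

lemma stern_inv (α : ℝ) (hirr : Irrational α) (h0 : 0 < α) (h1 : α < 1) : ∀ k,
    (((sternPair α k).1 : ℚ) : ℝ) < α ∧ α < (((sternPair α k).2 : ℚ) : ℝ) ∧
    (sternPair α k).1.num * (sternPair α k).2.den
      - (sternPair α k).2.num * (sternPair α k).1.den = -1 := by
  intro k
  induction k with
  | zero => simp [sternPair]; exact ⟨h0, h1⟩
  | succ k ih =>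
    obtain ⟨hl, hr, hdet⟩ := ih
    obtain ⟨hnum, hden⟩ := mediant_num_den hdet
    have hne : ((mediant (sternPair α k).1 (sternPair α k).2 : ℚ) : ℝ) ≠ α :=
      fun h => hirr ⟨_, h⟩
    rw [sternPair_succ]
    split_ifs with hm
    · refine ⟨hm, hr, ?_⟩
      simp only
      rw [hnum, hden]
      ring_nf
      ring_nf at hdet
      linarith [hdet]
    · refine ⟨hl, lt_of_le_of_ne (not_lt.mp hm) (Ne.symm hne), ?_⟩
      simp only
      rw [hnum, hden]
      ring_nf
      ring_nf at hdet
      linarith [hdet]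

lemma mediant_den_eq (α : ℝ) (hirr : Irrational α) (h0 : 0 < α) (h1 : α < 1) (k : ℕ) :
    (mediant (sternPair α k).1 (sternPair α k).2).den
      = (sternPair α k).1.den + (sternPair α k).2.den := by
  have := (mediant_num_den (stern_inv α hirr h0 h1 k).2.2).2
  exact_mod_cast this

lemma exists_left (α : ℝ) (hirr : Irrational α) (h0 : 0 < α) (h1 : α < 1) (k : ℕ) :
    ∃ j, k ≤ j ∧ ((mediant (sternPair α j).1 (sternPair α j).2 : ℚ) : ℝ) < α := by
  by_contra hc
  push_neg at hc
  set p := (sternPair α k).1 with hp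
  have key : ∀ i, (sternPair α (k+i)).1 = p ∧
      (sternPair α k).2.den + i ≤ (sternPair α (k+i)).2.den := by
    intro i
    induction i with
    | zero => simp [hp]
    | succ i ih =>
      have hj := hc (k+i) (Nat.le_add_right _ _)
      have hde := mediant_den_eq α hirr h0 h1 (k+i)
      have h1d := (sternPair α (k+i)).1.pos
      rw [show k + (i+1) = (k+i)+1 by ring, sternPair_succ, if_neg (not_lt.mpr hj)]
      exact ⟨ih.1, by simp only [hde]; omega⟩
  have hpl : ((p:ℚ):ℝ) < α := (stern_inv α hirr h0 h1 k).1
  obtain ⟨N, hN⟩ := exists_nat_gt (1 / (α - (p:ℝ)))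
  have h2 := stern_inv α hirr h0 h1 (k+N)
  obtain ⟨hfix, hdge⟩ := key N
  set q := (sternPair α (k+N)).2 with hq
  have hdet : p.num * q.den - q.num * p.den = -1 := by rw [← hfix]; exact h2.2.2
  have hαq : α < (q:ℝ) := h2.2.1
  have hb : (0:ℝ) < (p.den:ℝ) := by positivity
  have hd : (0:ℝ) < (q.den:ℝ) := by positivity
  have hdetR : (p.num:ℝ) * q.den - q.num * p.den = -1 := by exact_mod_cast hdet
  have hval : (q:ℝ) - (p:ℝ) = 1/((p.den:ℝ) * q.den) := by
    rw [Rat.cast_def, Rat.cast_def]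
    field_simp
    linear_combination (-1) * hdetR
  have hNpos : (0:ℝ) < N := lt_trans (div_pos one_pos (by linarith)) hN
  have hNd : (N:ℝ) ≤ (p.den : ℝ) * q.den := by
    have h1 : N ≤ p.den * q.den :=
      le_trans (by omega) (Nat.le_mul_of_pos_left q.den p.pos)
    exact_mod_cast h1
  have h1N : 1/((p.den:ℝ) * q.den) ≤ 1/(N:ℝ) := by
    apply one_div_le_one_div_of_le hNpos hNd
  have hlt : 1/(N:ℝ) < α - (p:ℝ) := by
    rw [div_lt_iff₀ hNpos]
    rw [div_lt_iff₀ (by linarith : (0:ℝ) < α - (p:ℝ))] at hN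
    linarith
  linarith

lemma exists_right (α : ℝ) (hirr : Irrational α) (h0 : 0 < α) (h1 : α < 1) (k : ℕ) :
    ∃ j, k ≤ j ∧ ¬ ((mediant (sternPair α j).1 (sternPair α j).2 : ℚ) : ℝ) < α := by
  by_contra hc
  push_neg at hc
  set q := (sternPair α k).2 with hq
  have key : ∀ i, (sternPair α (k+i)).2 = q ∧
      (sternPair α k).1.den + i ≤ (sternPair α (k+i)).1.den := by
    intro i
    induction i with
    | zero => simp [hq]
    | succ i ih =>
      have hj := hc (k+i) (Nat.le_add_right _ _)
      have hde := mediant_den_eq α hirr h0 h1 (k+i)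
      have h2d := (sternPair α (k+i)).2.pos
      rw [show k + (i+1) = (k+i)+1 by ring, sternPair_succ, if_pos hj]
      exact ⟨ih.1, by simp only [hde]; omega⟩
  have hqr : α < ((q:ℚ):ℝ) := (stern_inv α hirr h0 h1 k).2.1
  obtain ⟨N, hN⟩ := exists_nat_gt (1 / ((q:ℝ) - α))
  have h2 := stern_inv α hirr h0 h1 (k+N)
  obtain ⟨hfix, hdge⟩ := key N
  set p := (sternPair α (k+N)).1 with hp
  have hdet : p.num * q.den - q.num * p.den = -1 := by rw [← hfix]; exact h2.2.2
  have hαp : (p:ℝ) < α := h2.1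
  have hb : (0:ℝ) < (p.den:ℝ) := by positivity
  have hd : (0:ℝ) < (q.den:ℝ) := by positivity
  have hdetR : (p.num:ℝ) * q.den - q.num * p.den = -1 := by exact_mod_cast hdet
  have hval : (q:ℝ) - (p:ℝ) = 1/((p.den:ℝ) * q.den) := by
    rw [Rat.cast_def, Rat.cast_def]
    field_simp
    linear_combination (-1) * hdetR
  have hNpos : (0:ℝ) < N := lt_trans (div_pos one_pos (by linarith)) hN
  have hNd : (N:ℝ) ≤ (p.den : ℝ) * q.den := by
    have h1 : N ≤ p.den * q.den :=
      le_trans (by omega) (Nat.le_mul_of_pos_right p.den q.pos)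
    exact_mod_cast h1
  have h1N : 1/((p.den:ℝ) * q.den) ≤ 1/(N:ℝ) :=
    one_div_le_one_div_of_le hNpos hNd
  have hlt : 1/(N:ℝ) < (q:ℝ) - α := by
    rw [div_lt_iff₀ hNpos]
    rw [div_lt_iff₀ (by linarith : (0:ℝ) < (q:ℝ) - α)] at hN
    linarith
  linarith

lemma den_mono1 (α : ℝ) (hirr : Irrational α) (h0 : 0 < α) (h1 : α < 1) :
    Monotone (fun k => (sternPair α k).1.den) := by
  apply monotone_nat_of_le_succ
  intro k
  have hde := mediant_den_eq α hirr h0 h1 k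
  simp only [sternPair_succ]
  split_ifs <;> simp only [hde] <;> omega

lemma den_mono2 (α : ℝ) (hirr : Irrational α) (h0 : 0 < α) (h1 : α < 1) :
    Monotone (fun k => (sternPair α k).2.den) := by
  apply monotone_nat_of_le_succ
  intro k
  have hde := mediant_den_eq α hirr h0 h1 k
  simp only [sternPair_succ]
  split_ifs <;> simp only [hde] <;> omega

lemma dens_ge (α : ℝ) (hirr : Irrational α) (h0 : 0 < α) (h1 : α < 1) (M : ℕ) :
    ∃ K, ∀ k, K ≤ k → M ≤ (sternPair α k).1.den ∧ M ≤ (sternPair α k).2.den := by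
  induction M with
  | zero => exact ⟨0, fun k _ => ⟨Nat.zero_le _, Nat.zero_le _⟩⟩
  | succ M ih =>
    obtain ⟨K, hK⟩ := ih
    obtain ⟨j, hj, hjl⟩ := exists_left α hirr h0 h1 K
    obtain ⟨j', hj', hjr⟩ := exists_right α hirr h0 h1 (j+1)
    refine ⟨j'+1, fun k hk => ?_⟩
    have hKj := hK j hj
    have hd2 := (sternPair α j).2.pos
    have hstep1 : M + 1 ≤ (sternPair α (j+1)).1.den := by
      rw [sternPair_succ, if_pos hjl]
      simp only [mediant_den_eq α hirr h0 h1 j]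
      omega
    have hstep2 : M + 1 ≤ (sternPair α j').1.den :=
      le_trans hstep1 (den_mono1 α hirr h0 h1 hj')
    have hd2' := (sternPair α j').2.pos
    have hstep3 : M + 1 ≤ (sternPair α (j'+1)).1.den ∧
        M + 1 ≤ (sternPair α (j'+1)).2.den := by
      rw [sternPair_succ, if_neg hjr]
      simp only [mediant_den_eq α hirr h0 h1 j']
      exact ⟨hstep2, by omega⟩
    exact ⟨le_trans hstep3.1 (den_mono1 α hirr h0 h1 hk),
           le_trans hstep3.2 (den_mono2 α hirr h0 h1 hk)⟩

/-- For irrational 0 < α < 1, with F_n(α) the set of Farey approximations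
F_0(α),...,F_n(α) having denominator at most n, we have |F_n(α)|/n → 0 as n → ∞. -/
theorem stmt14 (α : ℝ) (h0 : 0 < α) (h1 : α < 1) (hirr : Irrational α) :
    Tendsto (fun n : ℕ =>
      (((((Finset.range (n + 1)).image (fareyApprox α))).filter
        (fun q => q.den ≤ n)).card : ℝ) / (n : ℝ))
      atTop (nhds 0) := by
  rw [Metric.tendsto_atTop]
  intro ε hε
  obtain ⟨M, hM⟩ := exists_nat_gt (2/ε)
  have hMR : (0:ℝ) < M := lt_trans (by positivity) hM
  have hMpos : 0 < M := by exact_mod_cast hMR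
  obtain ⟨K, hK⟩ := dens_ge α hirr h0 h1 M
  have hs : ∀ i, i * M ≤ (sternPair α (K+i)).1.den + (sternPair α (K+i)).2.den := by
    intro i
    induction i with
    | zero => simp
    | succ i ih =>
      have h2 := hK (K+i) (Nat.le_add_right _ _)
      rw [show K + (i+1) = (K+i)+1 by ring, sternPair_succ, Nat.succ_mul]
      have hde := mediant_den_eq α hirr h0 h1 (K+i)
      split_ifs <;> simp only [hde] <;> linarith [ih, h2.1, h2.2]
  have hfden : ∀ j, (fareyApprox α (j+2)).den
      = (sternPair α j).1.den + (sternPair α j).2.den :=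
    fun j => mediant_den_eq α hirr h0 h1 j
  obtain ⟨N0, hN0⟩ := exists_nat_gt (((K:ℝ)+3)*(2/ε))
  refine ⟨N0 + 1, fun n hn => ?_⟩
  have hnpos : 0 < n := by omega
  have hnR : (0:ℝ) < n := by exact_mod_cast hnpos
  -- counting bound
  have hsub : (((Finset.range (n+1)).image (fareyApprox α))).filter (fun q => q.den ≤ n)
      ⊆ ((Finset.range (n+1)).filter (fun k => (fareyApprox α k).den ≤ n)).image
          (fareyApprox α) := by
    intro q hq
    simp only [Finset.mem_filter, Finset.mem_image, Finset.mem_range] at *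
    obtain ⟨⟨k, hk, rfl⟩, hd⟩ := hq
    exact ⟨k, ⟨hk, hd⟩, rfl⟩
  have hsub2 : (Finset.range (n+1)).filter (fun k => (fareyApprox α k).den ≤ n)
      ⊆ Finset.range (K + n/M + 3) := by
    intro k hk
    simp only [Finset.mem_filter, Finset.mem_range] at *
    by_contra hkk
    push_neg at hkk
    obtain ⟨D, hD⟩ : ∃ D, n / M = D := ⟨_, rfl⟩
    rw [hD] at hkk
    obtain ⟨i, rfl⟩ : ∃ i, k = K + i + 2 := ⟨k - K - 2, by omega⟩
    have hden := hk.2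
    rw [show K + i + 2 = (K+i) + 2 by ring, hfden (K+i)] at hden
    have h1 := hs i
    have hi : D + 1 ≤ i := by omega
    have h2 : (D+1) * M ≤ i * M := Nat.mul_le_mul_right M hi
    obtain ⟨R, hR⟩ : ∃ R, n % M = R := ⟨_, rfl⟩
    have h3 : M * D + R = n := by rw [← hD, ← hR]; exact Nat.div_add_mod n M
    have h4' : R < M := by rw [← hR]; exact Nat.mod_lt n hMpos
    have h5 : (D+1)*M = M*D + M := by ring
    rw [h5] at h2
    linarith [h1, hden, h2, h3, h4']
  have hcard : ((((Finset.range (n+1)).image (fareyApprox α))).filter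
      (fun q => q.den ≤ n)).card ≤ K + n/M + 3 := by
    calc _ ≤ (((Finset.range (n+1)).filter
          (fun k => (fareyApprox α k).den ≤ n)).image (fareyApprox α)).card :=
          Finset.card_le_card hsub
      _ ≤ ((Finset.range (n+1)).filter (fun k => (fareyApprox α k).den ≤ n)).card :=
          Finset.card_image_le
      _ ≤ (Finset.range (K + n/M + 3)).card := Finset.card_le_card hsub2
      _ = K + n/M + 3 := Finset.card_range _
  rw [Real.dist_eq, sub_zero, abs_of_nonneg (by positivity)]
  have hb1 : (((((Finset.range (n+1)).image (fareyApprox α))).filter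
      (fun q => q.den ≤ n)).card : ℝ) ≤ (K:ℝ) + ((n/M : ℕ):ℝ) + 3 := by
    exact_mod_cast hcard
  have e1 : ((n/M:ℕ):ℝ)/n ≤ 1/(M:ℝ) := by
    have hle : ((n/M:ℕ):ℝ) ≤ (n:ℝ)/M := Nat.cast_div_le
    calc ((n/M:ℕ):ℝ)/n ≤ ((n:ℝ)/M)/n := by gcongr
      _ = 1/(M:ℝ) := by
        rw [div_div, mul_comm, ← div_div, div_self hnR.ne']
  have h1M : (1:ℝ)/M < ε/2 := by
    rw [div_lt_iff₀ hMR]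
    have h2 : 2 < (M:ℝ)*ε := by
      rw [div_lt_iff₀ hε] at hM
      linarith
    nlinarith
  have hnN : ((K:ℝ)+3)*(2/ε) < n := by
    refine lt_of_lt_of_le hN0 ?_
    exact_mod_cast (by omega : N0 ≤ n)
  have hK3 : ((K:ℝ)+3)/n < ε/2 := by
    rw [div_lt_iff₀ hnR]
    have hmul := mul_lt_mul_of_pos_right hnN (by positivity : (0:ℝ) < ε/2)
    calc (K:ℝ)+3 = ((K:ℝ)+3)*(2/ε)*(ε/2) := by field_simp
      _ < n*(ε/2) := hmul
      _ = ε/2 * n := by ring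
    
  calc (((((Finset.range (n+1)).image (fareyApprox α))).filter
      (fun q => q.den ≤ n)).card : ℝ) / n ≤ ((K:ℝ) + ((n/M : ℕ):ℝ) + 3)/n := by gcongr
    _ = ((K:ℝ)+3)/n + ((n/M:ℕ):ℝ)/n := by ring
    _ < ε/2 + ε/2 := by linarith [e1, h1M, hK3]
    _ = ε := by ring
end
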